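/- arXiv:1807.10178 — 7 statements merged into one kernel-verified Lean document; each statement's English description precedes it below -/
import Mathlib

section
/- Let S₀ : ℝ → ℝ be measurable, 1-periodic, bounded by M (|S₀(σ)| ≤ M for all σ), and of zero mean (∫₀¹ S₀(σ) dσ = 0). Let f : ℝ → ℝ be Lipschitz with constant L. Let ε > 0, n a positive integer, and w = nε. Then for every t ∈ ℝ, |(1/w) ∫_{t−w}^{t} S₀(τ/ε) f(τ) dτ| ≤ (M L / 2) ε. -/
/-!
Cut the window into the `n` periods of `S₀(·/ε)`. On a period `[a, a + ε]` the signal has zero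
mean, so `f` may be replaced by `f - f a`, which is at most `L (τ - a)` in absolute value; this
bounds the integral over the period by `M L ε² / 2`. Summing over the `n` periods and dividing by
`w = n ε` leaves `M L ε / 2`.
-/

open MeasureTheory intervalIntegral Function

variable {g f : ℝ → ℝ} {M : ℝ} {K : NNReal}

theorem abs_integral_mul_le_of_integral_eq_zero {a b : ℝ} (hab : a ≤ b)
    (hg : IntervalIntegrable g volume a b) (hgM : ∀ x ∈ Set.Ioc a b, |g x| ≤ M)
    (hg0 : ∫ x in a..b, g x = 0) (hf : LipschitzWith K f) :
    |∫ x in a..b, g x * f x| ≤ M * K * (b - a) ^ 2 / 2 := by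
  have hrecenter : ∫ x in a..b, g x * f x = ∫ x in a..b, g x * (f x - f a) := by
    simp only [mul_sub, integral_sub (hg.mul_continuousOn hf.continuous.continuousOn)
      (hg.mul_const _), intervalIntegral.integral_mul_const, hg0, zero_mul, sub_zero]
  have hpointwise : ∀ x ∈ Set.Ioc a b, ‖g x * (f x - f a)‖ ≤ M * K * (x - a) := by
    intro x hx
    have hfx : ‖f x - f a‖ ≤ K * (x - a) := by
      simpa [← dist_eq_norm, Real.dist_eq, abs_of_nonneg (sub_nonneg.2 hx.1.le)]
        using hf.dist_le_mul x a
    rw [norm_mul, mul_assoc]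
    exact mul_le_mul (hgM x hx) hfx (norm_nonneg _) ((abs_nonneg _).trans (hgM x hx))
  calc |∫ x in a..b, g x * f x| = ‖∫ x in a..b, g x * (f x - f a)‖ := by
        rw [hrecenter, Real.norm_eq_abs]
    _ ≤ ∫ x in a..b, M * K * (x - a) :=
        intervalIntegral.norm_integral_le_of_norm_le hab (ae_of_all _ hpointwise)
          ((by fun_prop : Continuous fun x => M * K * (x - a)).intervalIntegrable _ _)
    _ = M * K * (b - a) ^ 2 / 2 := by
        simp only [intervalIntegral.integral_const_mul, integral_comp_sub_right (fun x => x),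
          sub_self, integral_id]
        ring

theorem abs_integral_mul_le_of_periodic {T : ℝ} (hT : 0 ≤ T) (hper : Periodic g T)
    (hg : ∀ a b, IntervalIntegrable g volume a b) (hgM : ∀ x, |g x| ≤ M)
    (hg0 : ∫ x in 0..T, g x = 0) (hf : LipschitzWith K f) (a : ℝ) (n : ℕ) :
    |∫ x in a..a + n * T, g x * f x| ≤ n * (M * K * T ^ 2 / 2) := by
  induction n with
  | zero => simp
  | succ n ih =>
    have hgf : ∀ a b, IntervalIntegrable (fun x => g x * f x) volume a b :=
      fun a b => (hg a b).mul_continuousOn hf.continuous.continuousOn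
    have hmean : ∫ x in a + n * T..a + n * T + T, g x = 0 := by
      rw [hper.intervalIntegral_add_eq _ 0, zero_add, hg0]
    have hperiod := abs_integral_mul_le_of_integral_eq_zero (le_add_of_nonneg_right hT)
      (hg _ _) (fun x _ => hgM x) hmean hf
    rw [add_sub_cancel_left] at hperiod
    rw [Nat.cast_succ, add_one_mul, ← add_assoc,
      ← integral_add_adjacent_intervals (hgf _ _) (hgf _ _)]
    calc _ ≤ _ + _ := abs_add_le _ _
      _ ≤ n * (M * K * T ^ 2 / 2) + M * K * T ^ 2 / 2 := add_le_add ih hperiod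
      _ = (n + 1) * (M * K * T ^ 2 / 2) := by ring

theorem stmt_4_general (S₀ : ℝ → ℝ) (hmeas : Measurable S₀)
    (hper : ∀ σ : ℝ, S₀ (σ + 1) = S₀ σ)
    (M : ℝ) (hM : ∀ σ : ℝ, |S₀ σ| ≤ M)
    (hzero : (∫ σ in (0:ℝ)..1, S₀ σ) = 0)
    (f : ℝ → ℝ) (L : ℝ) (hLip : ∀ x y : ℝ, |f x - f y| ≤ L * |x - y|)
    (ε : ℝ) (hε : 0 < ε) (n : ℕ) (w : ℝ) (hw : w = n * ε) :
    ∀ t : ℝ, |(1 / w) * ∫ τ in (t - w)..t, S₀ (τ / ε) * f τ| ≤ (M * L / 2) * ε := by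
  intro t
  subst hw
  have hM0 : 0 ≤ M := (abs_nonneg _).trans (hM 0)
  have hL0 : 0 ≤ L := by simpa using (abs_nonneg _).trans (hLip 1 0)
  have hf : LipschitzWith L.toNNReal f := LipschitzWith.of_dist_le_mul fun x y => by
    simpa [Real.dist_eq, Real.coe_toNNReal L hL0] using hLip x y
  have hgper : Periodic (fun τ => S₀ (τ / ε)) ε := by
    simpa using (show Periodic S₀ 1 from hper).div_const ε
  have hg (a b : ℝ) : IntervalIntegrable (fun τ => S₀ (τ / ε)) volume a b :=
    (intervalIntegrable_const (c := M)).mono_fun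
      (hmeas.comp (measurable_id.div_const ε)).aestronglyMeasurable
      (ae_of_all _ fun τ => by simpa [abs_of_nonneg hM0] using hM (τ / ε))
  have hg0 : ∫ τ in 0..ε, S₀ (τ / ε) = 0 := by
    simp [integral_comp_div _ hε.ne', div_self hε.ne', hzero]
  have hwindow :=
    abs_integral_mul_le_of_periodic hε.le hgper hg (fun τ => hM _) hg0 hf (t - n * ε) n
  rw [sub_add_cancel, Real.coe_toNNReal L hL0] at hwindow
  rw [abs_mul]
  obtain rfl | hn := n.eq_zero_or_pos
  · simp only [Nat.cast_zero, zero_mul, div_zero, abs_zero]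
    positivity
  calc |1 / (n * ε)| * |∫ τ in (t - n * ε)..t, S₀ (τ / ε) * f τ|
      ≤ 1 / (n * ε) * (n * (M * L * ε ^ 2 / 2)) := by
        rw [abs_of_pos (by positivity)]
        gcongr
    _ = M * L / 2 * ε := by field_simp

/-- Averaging a high-frequency zero-mean periodic signal against a Lipschitz signal
over a window which is an integer multiple of the period gives an `O(ε)` result. -/
theorem stmt_4 (S₀ : ℝ → ℝ) (hmeas : Measurable S₀)
    (hper : ∀ σ : ℝ, S₀ (σ + 1) = S₀ σ)
    (M : ℝ) (hM : ∀ σ : ℝ, |S₀ σ| ≤ M)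
    (hzero : (∫ σ in (0:ℝ)..1, S₀ σ) = 0)
    (f : ℝ → ℝ) (L : ℝ) (hLip : ∀ x y : ℝ, |f x - f y| ≤ L * |x - y|)
    (ε : ℝ) (hε : 0 < ε) (n : ℕ) (hn : 0 < n) (w : ℝ) (hw : w = n * ε) :
    ∀ t : ℝ, |(1 / w) * ∫ τ in (t - w)..t, S₀ (τ / ε) * f τ| ≤ (M * L / 2) * ε :=
  stmt_4_general S₀ hmeas hper M hM hzero f L hLip ε hε n w hw
end

section
/- Let Δ : [0,∞) → ℝ be continuous and persistently exciting: there exist T > 0 and δ > 0 with ∫_t^{t+T} Δ(τ)² dτ ≥ δ for all t ≥ 0. Let γ > 0 and let x : [0,∞) → ℝ be differentiable with x'(t) = −γ Δ(t)² x(t). Then for all t ≥ 0, |x(t)| ≤ e^{γδ} · e^{−(γδ/T) t} · |x(0)|; in particular x converges to zero exponentially. -/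
/-!
The scalar equation `x' = -γ Δ² x` is solved explicitly by
`x t = exp (-γ ∫₀ᵗ Δ²) x 0`. Persistency of excitation makes `∫₀ᵗ Δ²` grow at least linearly:
`[0, t]` contains `⌊t / T⌋` disjoint windows of length `T`, each carrying mass `≥ δ`, so
`∫₀ᵗ Δ² ≥ δ ⌊t / T⌋ ≥ δ (t / T - 1)`; the loss of one window is the factor `e^{γδ}`.
-/

open Real MeasureTheory intervalIntegral

theorem eq_exp_integral_mul_of_hasDerivAt {a x : ℝ → ℝ} (ha : Continuous a)
    (hx : ∀ t, 0 ≤ t → HasDerivAt x (a t * x t) t) {t : ℝ} (ht : 0 ≤ t) :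
    x t = exp (∫ τ in 0..t, a τ) * x 0 := by
  set A : ℝ → ℝ := fun s => ∫ τ in 0..s, a τ
  have hA : ∀ s, HasDerivAt A (a s) s := fun s =>
    integral_hasDerivAt_right (ha.intervalIntegrable 0 s) (ha.stronglyMeasurableAtFilter _ _)
      ha.continuousAt
  have hinvariant : ∀ s, 0 ≤ s → HasDerivAt (fun s => x s * exp (-A s)) 0 s := by
    intro s hs
    have hexp : HasDerivAt (fun s => exp (-A s)) (exp (-A s) * -a s) s := (hA s).neg.exp
    have hprod := (hx s hs).mul hexp
    rwa [show a s * x s * exp (-A s) + x s * (exp (-A s) * -a s) = 0 by ring] at hprod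
  have hconst : x t * exp (-A t) = x 0 := by
    simpa [A] using constant_of_has_deriv_right_zero
      (fun s hs => (hinvariant s hs.1).continuousAt.continuousWithinAt)
      (fun s hs => (hinvariant s hs.1).hasDerivWithinAt) t ⟨ht, le_rfl⟩
  calc x t = exp (A t) * (x t * exp (-A t)) := by
        rw [mul_left_comm, ← exp_add, add_neg_cancel, exp_zero, mul_one]
    _ = exp (A t) * x 0 := by rw [hconst]

section PersistentExcitation

variable {f : ℝ → ℝ} {T δ : ℝ}

theorem nat_mul_le_integral_of_persistentlyExciting (hf : ∀ a b, IntervalIntegrable f volume a b)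
    (hPE : ∀ t, 0 ≤ t → δ ≤ ∫ τ in t..t + T, f τ) (hT : 0 ≤ T) (n : ℕ) :
    n * δ ≤ ∫ τ in 0..n * T, f τ := by
  induction n with
  | zero => simp
  | succ n ih =>
    have hwindow := hPE (n * T) (by positivity)
    rw [Nat.cast_succ, add_one_mul, add_one_mul,
      ← integral_add_adjacent_intervals (hf 0 (n * T)) (hf (n * T) (n * T + T))]
    linarith

theorem le_integral_of_persistentlyExciting (hf : ∀ a b, IntervalIntegrable f volume a b)
    (hPE : ∀ t, 0 ≤ t → δ ≤ ∫ τ in t..t + T, f τ) (hf0 : ∀ t, 0 ≤ f t) (hT : 0 < T) (hδ : 0 ≤ δ)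
    {t : ℝ} (ht : 0 ≤ t) : δ * (t / T - 1) ≤ ∫ τ in 0..t, f τ := by
  set n := ⌊t / T⌋₊
  have hnT : n * T ≤ t := (le_div_iff₀ hT).1 (Nat.floor_le (by positivity))
  have hlt : t / T - 1 < n := by linarith [Nat.lt_floor_add_one (t / T)]
  calc δ * (t / T - 1) ≤ n * δ := by nlinarith
    _ ≤ ∫ τ in 0..n * T, f τ := nat_mul_le_integral_of_persistentlyExciting hf hPE hT.le n
    _ ≤ ∫ τ in 0..t, f τ :=
      integral_mono_interval le_rfl (by positivity) hnT
        (Filter.Eventually.of_forall hf0) (hf 0 t)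

end PersistentExcitation

/-- Exponential convergence of the DREM error under persistency of excitation:
if `∫_t^{t+T} Δ² ≥ δ` for all `t ≥ 0` and `x' = −γ Δ(t)² x`, then
`|x(t)| ≤ e^{γδ} e^{−(γδ/T)t} |x(0)|`. -/
theorem stmt_9 (Δ : ℝ → ℝ) (hΔ : Continuous Δ)
    (T δ : ℝ) (hT : 0 < T) (hδ : 0 < δ)
    (hPE : ∀ t : ℝ, 0 ≤ t → δ ≤ ∫ τ in t..(t + T), (Δ τ)^2)
    (γ : ℝ) (hγ : 0 < γ) (x : ℝ → ℝ)
    (hx : ∀ t : ℝ, 0 ≤ t → HasDerivAt x (-γ * (Δ t)^2 * x t) t) :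
    ∀ t : ℝ, 0 ≤ t →
      |x t| ≤ Real.exp (γ * δ) * Real.exp (-(γ * δ / T) * t) * |x 0| := by
  intro t ht
  have hΔ2 : Continuous fun τ => Δ τ ^ 2 := hΔ.pow 2
  have hsol : x t = exp (-γ * ∫ τ in 0..t, Δ τ ^ 2) * x 0 := by
    rw [← intervalIntegral.integral_const_mul]
    exact eq_exp_integral_mul_of_hasDerivAt (hΔ2.const_mul (-γ)) hx ht
  have hgrowth : δ * (t / T - 1) ≤ ∫ τ in 0..t, Δ τ ^ 2 :=
    le_integral_of_persistentlyExciting (fun a b => hΔ2.intervalIntegrable a b) hPE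
      (fun τ => sq_nonneg (Δ τ)) hT hδ.le ht
  rw [hsol, abs_mul, abs_of_pos (exp_pos _), ← exp_add]
  gcongr
  have hexponent : γ * δ + -(γ * δ / T) * t = -γ * (δ * (t / T - 1)) := by
    field_simp; ring
  rw [hexponent]
  exact mul_le_mul_of_nonpos_left hgrowth (neg_nonpos.2 hγ.le)
end

section
/- Let a : [0,∞) → ℝ be continuous with a(t) ≥ 0 for all t, and suppose there exist T > 0 and μ > 0 such that ∫_t^{t+T} a(τ) dτ ≥ μ for all t ≥ 0. Let x : [0,∞) → ℝ be differentiable and e : [0,∞) → ℝ continuous with x'(t) = −a(t) x(t) + e(t) and |e(t)| ≤ δ for all t ≥ 0. Then for all t ≥ 0, |x(t)| ≤ e^{μ} e^{−(μ/T) t} |x(0)| + δ e^{μ} T / μ; in particular limsup_{t→∞} |x(t)| ≤ δ e^{μ} T / μ. -/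
/-!
Let `A t = ∫₀ᵗ a`. Persistent excitation makes `A` grow at the average rate `c = μ / T` up to a
loss of at most `μ`: `A t - A s ≥ c (t - s) - μ` for `0 ≤ s ≤ t`. The integrating factor `e^A`
turns the equation into `(x e^A)' = e e^A`, and the growth bound gives
`|e s| e^{A s} ≤ δ e^μ e^{A t} e^{-c (t - s)}`, whose integral over `[0, t]` is at most
`δ e^μ e^{A t} / c`. Dividing by `e^{A t} ≥ e^{c t - μ}` gives the estimate, and the limsup bound
follows because the transient term decays.
-/

open Filter Set MeasureTheory Real

section PersistentExcitation

variable {a : ℝ → ℝ} {T μ : ℝ}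

theorem nat_mul_le_integral_of_le_integral_add
    (hai : ∀ u v, IntervalIntegrable a volume u v) (hT : 0 ≤ T)
    (hPE : ∀ t, 0 ≤ t → μ ≤ ∫ τ in t..t + T, a τ) {s : ℝ} (hs : 0 ≤ s) (n : ℕ) :
    n * μ ≤ ∫ τ in s..s + n * T, a τ := by
  induction n with
  | zero => simp
  | succ n ih =>
    have hstep := hPE (s + n * T) (by positivity)
    rw [← intervalIntegral.integral_add_adjacent_intervals (hai s (s + n * T))
      (hai (s + n * T) (s + (n + 1 : ℕ) * T))]
    push_cast at hstep ⊢
    rw [show s + n * T + T = s + (n + 1) * T by ring] at hstep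
    linarith

/-- Over `[s, t]` the window `[s, s + ⌊(t - s) / T⌋ T]` contributes `⌊(t - s) / T⌋ μ` and the
remainder is nonnegative. -/
theorem div_mul_sub_le_integral_of_le_integral_add
    (hai : ∀ u v, IntervalIntegrable a volume u v) (ha0 : ∀ t, 0 ≤ t → 0 ≤ a t)
    (hT : 0 < T) (hμ : 0 ≤ μ) (hPE : ∀ t, 0 ≤ t → μ ≤ ∫ τ in t..t + T, a τ)
    {s t : ℝ} (hs : 0 ≤ s) (hst : s ≤ t) :
    μ / T * (t - s) - μ ≤ ∫ τ in s..t, a τ := by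
  set n := ⌊(t - s) / T⌋₊
  have hn_le : n * T ≤ t - s := (le_div_iff₀ hT).1 (Nat.floor_le (by positivity))
  have hn_lt : (t - s) / T < n + 1 := Nat.lt_floor_add_one _
  have hwindows := nat_mul_le_integral_of_le_integral_add hai hT.le hPE hs n
  have hrest : 0 ≤ ∫ τ in s + n * T..t, a τ :=
    intervalIntegral.integral_nonneg (by linarith) fun u hu => ha0 u (by
      linarith [hu.1, mul_nonneg n.cast_nonneg hT.le])
  have hrate : μ / T * (t - s) - μ ≤ n * μ := by
    have := mul_le_mul_of_nonneg_left hn_lt.le hμ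
    rw [div_mul_eq_mul_div, mul_div_assoc]
    linarith
  rw [← intervalIntegral.integral_add_adjacent_intervals (hai s (s + n * T)) (hai _ t)]
  linarith

end PersistentExcitation

section IntegratingFactor

variable {x e a A : ℝ → ℝ} {c μ δ t : ℝ}

theorem hasDerivAt_mul_exp_of_hasDerivAt_neg_mul_add {α ε : ℝ}
    (hx : HasDerivAt x (-α * x t + ε) t) (hA : HasDerivAt A α t) :
    HasDerivAt (fun s => x s * exp (A s)) (ε * exp (A t)) t :=
  (hx.mul hA.exp).congr_deriv (by ring)

/-- Comparison with `B s = δ e^μ e^{A t} (e^{c (s - t)} - e^{-c t}) / c`, which vanishes at `0`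
and whose derivative dominates `|(x e^A)'|` on `[0, t]`. -/
theorem abs_mul_exp_sub_le_of_sub_le (hc : 0 < c)
    (hA : ∀ s, HasDerivAt A (a s) s)
    (hgrowth : ∀ s ∈ Icc 0 t, c * (t - s) - μ ≤ A t - A s)
    (hx : ∀ s ∈ Icc 0 t, HasDerivAt x (-a s * x s + e s) s)
    (heb : ∀ s ∈ Icc 0 t, |e s| ≤ δ) (ht : 0 ≤ t) :
    |x t * exp (A t) - x 0 * exp (A 0)| ≤ δ * exp μ * exp (A t) / c := by
  have hδ : 0 ≤ δ := (abs_nonneg _).trans (heb 0 ⟨le_rfl, ht⟩)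
  set K := δ * exp μ * exp (A t)
  have hy : ∀ s ∈ Icc 0 t, HasDerivAt (fun s => x s * exp (A s) - x 0 * exp (A 0))
      (e s * exp (A s)) s := fun s hs =>
    (hasDerivAt_mul_exp_of_hasDerivAt_neg_mul_add (hx s hs) (hA s)).sub_const _
  have hB : ∀ s, HasDerivAt (fun s => K / c * (exp (c * (s - t)) - exp (-c * t)))
      (K * exp (c * (s - t))) s := fun s =>
    ((((hasDerivAt_id' s).sub_const t).const_mul c).exp.sub_const (exp (-c * t))).const_mul (K / c)
      |>.congr_deriv (by field_simp)
  have hbound : ∀ s ∈ Ico 0 t, ‖e s * exp (A s)‖ ≤ K * exp (c * (s - t)) := by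
    intro s hs
    have hexp : exp (A s) ≤ exp μ * exp (A t) * exp (c * (s - t)) := by
      rw [← exp_add, ← exp_add]
      exact exp_le_exp.2 (by linarith [hgrowth s (Ico_subset_Icc_self hs)])
    rw [Real.norm_eq_abs, abs_mul, abs_of_pos (exp_pos _)]
    calc |e s| * exp (A s) ≤ δ * (exp μ * exp (A t) * exp (c * (s - t))) :=
          mul_le_mul (heb s (Ico_subset_Icc_self hs)) hexp (exp_pos _).le hδ
      _ = K * exp (c * (s - t)) := by ring
  have hcomp := image_norm_le_of_norm_deriv_right_le_deriv_boundary
    (fun s hs => (hy s hs).continuousAt.continuousWithinAt)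
    (fun s hs => (hy s (Ico_subset_Icc_self hs)).hasDerivWithinAt)
    (by simp) hB hbound (right_mem_Icc.2 ht)
  simp only [Real.norm_eq_abs, sub_self, mul_zero, exp_zero] at hcomp
  have hK : 0 ≤ K / c := by positivity
  calc _ ≤ K / c * (1 - exp (-c * t)) := hcomp
    _ ≤ K / c := mul_le_of_le_one_right hK (by linarith [exp_pos (-c * t)])

theorem abs_le_exp_mul_abs_add_of_sub_le (hc : 0 < c)
    (hA : ∀ s, HasDerivAt A (a s) s)
    (hgrowth : ∀ s ∈ Icc 0 t, c * (t - s) - μ ≤ A t - A s)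
    (hx : ∀ s ∈ Icc 0 t, HasDerivAt x (-a s * x s + e s) s)
    (heb : ∀ s ∈ Icc 0 t, |e s| ≤ δ) (ht : 0 ≤ t) :
    |x t| ≤ exp μ * exp (-c * t) * |x 0| + δ * exp μ / c := by
  have hdiff := abs_mul_exp_sub_le_of_sub_le hc hA hgrowth hx heb ht
  have hpos := exp_pos (A t)
  have hdecay : exp (A 0) ≤ exp μ * exp (-c * t) * exp (A t) := by
    rw [← exp_add, ← exp_add]
    exact exp_le_exp.2 (by linarith [hgrowth 0 ⟨le_rfl, ht⟩])
  have hmain : |x t| * exp (A t) ≤ (exp μ * exp (-c * t) * |x 0| + δ * exp μ / c) * exp (A t) :=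
    calc |x t| * exp (A t) = |x t * exp (A t)| := by rw [abs_mul, abs_of_pos hpos]
      _ ≤ |x 0 * exp (A 0)| + δ * exp μ * exp (A t) / c := by
          linarith [abs_sub_abs_le_abs_sub (x t * exp (A t)) (x 0 * exp (A 0))]
      _ = |x 0| * exp (A 0) + δ * exp μ * exp (A t) / c := by
          rw [abs_mul, abs_of_pos (exp_pos _)]
      _ ≤ |x 0| * (exp μ * exp (-c * t) * exp (A t)) + δ * exp μ * exp (A t) / c := by
          gcongr
      _ = _ := by ring
  exact le_of_mul_le_mul_right hmain hpos

end IntegratingFactor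

theorem limsup_le_of_le_mul_exp_neg_add {f : ℝ → ℝ} {C c D : ℝ} (hc : 0 < c)
    (hf0 : ∀ t, 0 ≤ f t) (hf : ∀ t, 0 ≤ t → f t ≤ C * exp (-c * t) + D) :
    limsup f atTop ≤ D := by
  have hdecay : Tendsto (fun t => C * exp (-c * t) + D) atTop (nhds D) := by
    have := ((tendsto_exp_neg_atTop_nhds_zero.comp
      (tendsto_id.const_mul_atTop hc)).const_mul C).add_const D
    simpa [Function.comp_def, neg_mul] using this
  calc limsup f atTop ≤ limsup (fun t => C * exp (-c * t) + D) atTop :=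
        limsup_le_limsup (eventually_atTop.2 ⟨0, hf⟩)
          (isBoundedUnder_of ⟨0, hf0⟩).isCoboundedUnder_le hdecay.isBoundedUnder_le
    _ = D := hdecay.limsup_eq

theorem stmt_10_general (a : ℝ → ℝ) (ha : Continuous a) (ha0 : ∀ t : ℝ, 0 ≤ t → 0 ≤ a t)
    (T μ : ℝ) (hT : 0 < T) (hμ : 0 < μ)
    (hPE : ∀ t : ℝ, 0 ≤ t → μ ≤ ∫ τ in t..(t + T), a τ)
    (x e : ℝ → ℝ) (δ : ℝ)
    (hx : ∀ t : ℝ, 0 ≤ t → HasDerivAt x (-a t * x t + e t) t)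
    (heb : ∀ t : ℝ, 0 ≤ t → |e t| ≤ δ) :
    (∀ t : ℝ, 0 ≤ t →
      |x t| ≤ Real.exp μ * Real.exp (-(μ / T) * t) * |x 0| + δ * Real.exp μ * T / μ) ∧
    limsup (fun t : ℝ => |x t|) atTop ≤ δ * Real.exp μ * T / μ := by
  have hai : ∀ u v, IntervalIntegrable a volume u v := ha.intervalIntegrable
  have hA : ∀ s, HasDerivAt (fun t => ∫ τ in 0..t, a τ) (a s) s := fun s =>
    (ha.integral_hasStrictDerivAt 0 s).hasDerivAt
  have hbound : ∀ t, 0 ≤ t →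
      |x t| ≤ exp μ * exp (-(μ / T) * t) * |x 0| + δ * exp μ * T / μ := by
    intro t ht
    have hgrowth : ∀ s ∈ Icc 0 t,
        μ / T * (t - s) - μ ≤ (∫ τ in 0..t, a τ) - ∫ τ in 0..s, a τ := fun s hs => by
      rw [intervalIntegral.integral_interval_sub_left (hai 0 t) (hai 0 s)]
      exact div_mul_sub_le_integral_of_le_integral_add hai ha0 hT hμ.le hPE hs.1 hs.2
    simpa [div_div_eq_mul_div] using abs_le_exp_mul_abs_add_of_sub_le (div_pos hμ hT) hA
      hgrowth (fun s hs => hx s hs.1) (fun s hs => heb s hs.1) ht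
  exact ⟨hbound, limsup_le_of_le_mul_exp_neg_add (C := exp μ * |x 0|) (div_pos hμ hT)
    (fun t => abs_nonneg _) fun t ht => (hbound t ht).trans_eq (by ring)⟩

/-- ISS estimate for a scalar LTV system with a persistently exciting nonnegative gain:
if `∫_t^{t+T} a ≥ μ` and `x' = −a(t) x + e(t)` with `|e| ≤ δ`, then
`|x(t)| ≤ e^μ e^{−(μ/T)t}|x(0)| + δ e^μ T/μ`. -/
theorem stmt_10 (a : ℝ → ℝ) (ha : Continuous a) (ha0 : ∀ t : ℝ, 0 ≤ t → 0 ≤ a t)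
    (T μ : ℝ) (hT : 0 < T) (hμ : 0 < μ)
    (hPE : ∀ t : ℝ, 0 ≤ t → μ ≤ ∫ τ in t..(t + T), a τ)
    (x e : ℝ → ℝ) (he : Continuous e) (δ : ℝ)
    (hx : ∀ t : ℝ, 0 ≤ t → HasDerivAt x (-a t * x t + e t) t)
    (heb : ∀ t : ℝ, 0 ≤ t → |e t| ≤ δ) :
    (∀ t : ℝ, 0 ≤ t →
      |x t| ≤ Real.exp μ * Real.exp (-(μ / T) * t) * |x 0| + δ * Real.exp μ * T / μ) ∧
    limsup (fun t : ℝ => |x t|) atTop ≤ δ * Real.exp μ * T / μ :=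
  stmt_10_general a ha ha0 T μ hT hμ hPE x e δ hx heb
end

section
/- Let S₀ : ℝ → ℝ be continuous and 1-periodic with δ₀ := ∫₀¹ S₀(σ)² dσ > 0. Let ε ∈ (0,1), γ⋆ > 0, and set γ := γ⋆/ε. Let θ̃ : [0,∞) → ℝ be differentiable with θ̃'(t) = −γ S₀(t/ε)² θ̃(t) + γ d₁(t) + d₂(t), where d₁, d₂ are continuous with |d₁(t)| ≤ c₁ ε² and |d₂(t)| ≤ c₂ ε for all t ≥ 0. Then for all t ≥ 0, |θ̃(t)| ≤ e^{γ⋆δ₀} e^{−(γ⋆δ₀/ε) t} |θ̃(0)| + e^{γ⋆δ₀} (γ⋆ c₁ + c₂) ε² / (γ⋆ δ₀); in particular limsup_{t→∞} |θ̃(t)| ≤ e^{γ⋆δ₀} (γ⋆ c₁ + c₂) ε² / (γ⋆ δ₀) = O(ε²). -/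
/-!
The gain `a t = γ S₀(t/ε)²` is persistently exciting: by periodicity its integral over any window
`[s, t]` is at least `(γ⋆δ₀/ε)(t - s) - γ⋆δ₀`, the deficit coming from the incomplete last period.
Variation of constants with the integrating factor `exp ∫₀ᵗ a` turns this into the exponential
bound `e^{γ⋆δ₀} e^{-(γ⋆δ₀/ε)(t - s)}` on the transition kernel, and integrating the kernel against
the forcing `γ d₁ + d₂ = O(ε)` leaves a residual of order `ε · ε/(γ⋆δ₀)`.
-/

open Filter Topology Real

def IsPersistentlyExciting (a : ℝ → ℝ) (ρ κ : ℝ) : Prop :=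
  ∀ s t, s ≤ t → ρ * (t - s) - κ ≤ ∫ τ in s..t, a τ

theorem Function.Periodic.isPersistentlyExciting {f : ℝ → ℝ} {T : ℝ} (hf : Function.Periodic f T)
    (hT : 0 < T) (hf_int : IntervalIntegrable f MeasureTheory.volume 0 T) (hf_nonneg : 0 ≤ f) :
    IsPersistentlyExciting f ((∫ x in 0..T, f x) / T) (∫ x in 0..T, f x) := by
  intro u v huv
  have hint := hf.intervalIntegrable₀ hT.ne' hf_int
  set δ := ∫ x in 0..T, f x
  set n : ℤ := ⌊(v - u) / T⌋
  have hn_le : (n : ℝ) * T ≤ v - u := (le_div_iff₀ hT).1 (Int.floor_le _)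
  have hn_gt : (v - u) / T - 1 < n := by linarith [Int.lt_floor_add_one ((v - u) / T)]
  have hδ : 0 ≤ δ := intervalIntegral.integral_nonneg hT.le fun x _ => hf_nonneg x
  have hperiods : ∫ x in u..u + n • T, f x = n * δ := by
    rw [hf.intervalIntegral_add_zsmul_eq n u hint, hf.intervalIntegral_add_eq u 0, zero_add,
      zsmul_eq_mul]
  have hrest : 0 ≤ ∫ x in u + n • T..v, f x :=
    intervalIntegral.integral_nonneg (by rw [zsmul_eq_mul]; linarith) fun x _ => hf_nonneg x
  calc δ / T * (v - u) - δ = ((v - u) / T - 1) * δ := by ring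
    _ ≤ n * δ := mul_le_mul_of_nonneg_right hn_gt.le hδ
    _ ≤ ∫ x in u..v, f x := by
      rw [← intervalIntegral.integral_add_adjacent_intervals (hint u (u + n • T)) (hint _ v),
        hperiods]
      linarith

theorem IsPersistentlyExciting.const_mul_comp_div {a : ℝ → ℝ} {ρ κ c ε : ℝ}
    (ha : IsPersistentlyExciting a ρ κ) (hc : 0 ≤ c) (hε : 0 < ε) :
    IsPersistentlyExciting (fun t => c * a (t / ε)) (c * ρ) (c * ε * κ) := by
  intro s t hst
  have hscaled := ha (s / ε) (t / ε) (div_le_div_of_nonneg_right hst hε.le)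
  rw [intervalIntegral.integral_const_mul, intervalIntegral.integral_comp_div _ hε.ne',
    smul_eq_mul]
  calc c * ρ * (t - s) - c * ε * κ = c * ε * (ρ * (t / ε - s / ε) - κ) := by
        field_simp
    _ ≤ c * (ε * ∫ x in s / ε..t / ε, a x) := by
      rw [← mul_assoc]; exact mul_le_mul_of_nonneg_left hscaled (by positivity)

theorem integral_exp_neg_mul_sub_le {ρ : ℝ} (hρ : 0 < ρ) (t : ℝ) :
    ∫ s in 0..t, exp (-ρ * (t - s)) ≤ 1 / ρ := by
  have hprim : ∀ s, HasDerivAt (fun s => exp (-ρ * (t - s)) / ρ) (exp (-ρ * (t - s))) s := by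
    intro s
    exact ((((hasDerivAt_id' s).const_sub t).const_mul (-ρ)).exp.div_const ρ).congr_deriv
      (by field_simp)
  rw [intervalIntegral.integral_eq_sub_of_hasDerivAt (fun s _ => hprim s)
    ((by fun_prop : Continuous fun s => exp (-ρ * (t - s))).intervalIntegrable 0 t)]
  simp only [sub_self, mul_zero, exp_zero, sub_le_self_iff]
  positivity

theorem eq_exp_mul_add_integral_of_hasDerivAt {a A w θ : ℝ → ℝ}
    (hA : ∀ t, HasDerivAt A (a t) t) (hw : Continuous w)
    (hθ : ∀ t, 0 ≤ t → HasDerivAt θ (-a t * θ t + w t) t) {t : ℝ} (ht : 0 ≤ t) :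
    θ t = exp (A 0 - A t) * θ 0 + ∫ s in 0..t, exp (A s - A t) * w s := by
  have hA_cont : Continuous A := continuous_iff_continuousAt.2 fun t => (hA t).continuousAt
  have hderiv : ∀ s ∈ Set.uIcc 0 t, HasDerivAt (fun s => θ s * exp (A s)) (w s * exp (A s)) s := by
    intro s hs
    rw [Set.uIcc_of_le ht] at hs
    exact ((hθ s hs.1).mul (hA s).exp).congr_deriv (by ring)
  have hftc := intervalIntegral.integral_eq_sub_of_hasDerivAt hderiv
    ((hw.mul (continuous_exp.comp hA_cont)).intervalIntegrable 0 t)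
  have hfactor : ∫ s in 0..t, exp (A s - A t) * w s = (∫ s in 0..t, w s * exp (A s)) * exp (-A t) := by
    rw [← intervalIntegral.integral_mul_const]
    congr 1 with s
    rw [sub_eq_add_neg, exp_add]
    ring
  rw [hfactor, hftc, exp_sub, exp_neg]
  field_simp
  ring

section LinearTimeVarying

variable {a w θ : ℝ → ℝ} {ρ κ M : ℝ}

theorem IsPersistentlyExciting.abs_le_of_hasDerivAt (hpe : IsPersistentlyExciting a ρ κ)
    (hρ : 0 < ρ) (ha : Continuous a) (hw : Continuous w) (hwM : ∀ t, 0 ≤ t → |w t| ≤ M)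
    (hθ : ∀ t, 0 ≤ t → HasDerivAt θ (-a t * θ t + w t) t) {t : ℝ} (ht : 0 ≤ t) :
    |θ t| ≤ exp κ * exp (-ρ * t) * |θ 0| + exp κ * M / ρ := by
  set A := fun t => ∫ s in 0..t, a s
  have hA : ∀ t, HasDerivAt A (a t) t := fun t => (ha.integral_hasStrictDerivAt 0 t).hasDerivAt
  have hA_cont : Continuous A := Differentiable.continuous fun t => (hA t).differentiableAt
  have hdecay : ∀ s ≤ t, exp (A s - A t) ≤ exp κ * exp (-ρ * (t - s)) := by
    intro s hs
    rw [← exp_add, exp_le_exp]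
    have hexc := hpe s t hs
    rw [← intervalIntegral.integral_interval_sub_left (ha.intervalIntegrable 0 t)
      (ha.intervalIntegrable 0 s)] at hexc
    linarith
  have hM : 0 ≤ M := (abs_nonneg _).trans (hwM 0 le_rfl)
  have hforced : |∫ s in 0..t, exp (A s - A t) * w s| ≤ exp κ * M / ρ :=
    calc |∫ s in 0..t, exp (A s - A t) * w s|
        ≤ ∫ s in 0..t, |exp (A s - A t) * w s| :=
          intervalIntegral.abs_integral_le_integral_abs ht
      _ ≤ ∫ s in 0..t, exp κ * M * exp (-ρ * (t - s)) := by
          refine intervalIntegral.integral_mono_on ht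
            (Continuous.intervalIntegrable (by fun_prop) 0 t)
            (Continuous.intervalIntegrable (by fun_prop) 0 t) fun s hs => ?_
          rw [abs_mul, abs_of_pos (exp_pos _)]
          calc exp (A s - A t) * |w s| ≤ exp κ * exp (-ρ * (t - s)) * M :=
                mul_le_mul (hdecay s hs.2) (hwM s hs.1) (abs_nonneg _) (by positivity)
            _ = exp κ * M * exp (-ρ * (t - s)) := by ring
      _ = exp κ * M * ∫ s in 0..t, exp (-ρ * (t - s)) := intervalIntegral.integral_const_mul _ _
      _ ≤ exp κ * M * (1 / ρ) :=
          mul_le_mul_of_nonneg_left (integral_exp_neg_mul_sub_le hρ t) (by positivity)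
      _ = exp κ * M / ρ := mul_one_div _ _
  have hfree : exp (A 0 - A t) ≤ exp κ * exp (-ρ * t) := by simpa using hdecay 0 ht
  rw [eq_exp_mul_add_integral_of_hasDerivAt hA hw hθ ht]
  calc |exp (A 0 - A t) * θ 0 + ∫ s in 0..t, exp (A s - A t) * w s|
      ≤ |exp (A 0 - A t) * θ 0| + |∫ s in 0..t, exp (A s - A t) * w s| := abs_add_le _ _
    _ = exp (A 0 - A t) * |θ 0| + |∫ s in 0..t, exp (A s - A t) * w s| := by
        rw [abs_mul, abs_of_pos (exp_pos _)]
    _ ≤ exp κ * exp (-ρ * t) * |θ 0| + exp κ * M / ρ := by gcongr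

theorem IsPersistentlyExciting.limsup_abs_le_of_hasDerivAt (hpe : IsPersistentlyExciting a ρ κ)
    (hρ : 0 < ρ) (ha : Continuous a) (hw : Continuous w) (hwM : ∀ t, 0 ≤ t → |w t| ≤ M)
    (hθ : ∀ t, 0 ≤ t → HasDerivAt θ (-a t * θ t + w t) t) :
    limsup (fun t => |θ t|) atTop ≤ exp κ * M / ρ := by
  have hbound : Tendsto (fun t => exp κ * exp (-ρ * t) * |θ 0| + exp κ * M / ρ) atTop
      (𝓝 (exp κ * M / ρ)) := by
    have hexp : Tendsto (fun t => exp (-ρ * t)) atTop (𝓝 0) :=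
      tendsto_exp_atBot.comp (tendsto_id.const_mul_atTop_of_neg (neg_neg_of_pos hρ))
    simpa using ((hexp.const_mul (exp κ)).mul_const |θ 0|).add_const (exp κ * M / ρ)
  have hle : ∀ᶠ t in atTop, |θ t| ≤ exp κ * exp (-ρ * t) * |θ 0| + exp κ * M / ρ :=
    eventually_atTop.2 ⟨0, fun t ht => hpe.abs_le_of_hasDerivAt hρ ha hw hwM hθ ht⟩
  exact (limsup_le_limsup hle (isCoboundedUnder_le_of_le atTop fun t => abs_nonneg _)
    hbound.isBoundedUnder_le).trans hbound.limsup_eq.le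

end LinearTimeVarying

/-- Error estimate for the DREM-based virtual-output estimator: the error `θ̃` of
`θ̃' = −γ S₀(t/ε)² θ̃ + γ d₁ + d₂` with `γ = γ⋆/ε`, `|d₁| ≤ c₁ ε²`, `|d₂| ≤ c₂ ε`,
converges exponentially to an `O(ε²)` neighborhood of zero. -/
theorem stmt_11 (S₀ : ℝ → ℝ) (hS : Continuous S₀) (hSper : ∀ t : ℝ, S₀ (t + 1) = S₀ t)
    (δ₀ : ℝ) (hδ₀ : δ₀ = ∫ σ in (0:ℝ)..1, (S₀ σ)^2) (hδ₀pos : 0 < δ₀)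
    (ε : ℝ) (hε : ε ∈ Set.Ioo (0:ℝ) 1) (γs γ : ℝ) (hγs : 0 < γs) (hγ : γ = γs / ε)
    (θ d₁ d₂ : ℝ → ℝ) (hd₁c : Continuous d₁) (hd₂c : Continuous d₂)
    (c₁ c₂ : ℝ)
    (hd₁ : ∀ t : ℝ, 0 ≤ t → |d₁ t| ≤ c₁ * ε^2)
    (hd₂ : ∀ t : ℝ, 0 ≤ t → |d₂ t| ≤ c₂ * ε)
    (hθ : ∀ t : ℝ, 0 ≤ t →
      HasDerivAt θ (-γ * (S₀ (t / ε))^2 * θ t + γ * d₁ t + d₂ t) t) :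
    (∀ t : ℝ, 0 ≤ t →
      |θ t| ≤ Real.exp (γs * δ₀) * Real.exp (-(γs * δ₀ / ε) * t) * |θ 0| +
        Real.exp (γs * δ₀) * (γs * c₁ + c₂) * ε^2 / (γs * δ₀)) ∧
    limsup (fun t : ℝ => |θ t|) atTop ≤
      Real.exp (γs * δ₀) * (γs * c₁ + c₂) * ε^2 / (γs * δ₀) := by
  obtain ⟨hε, -⟩ := hε
  have hγ₀ : 0 ≤ γ := hγ ▸ (div_pos hγs hε).le
  have hper : Function.Periodic (fun σ => S₀ σ ^ 2) 1 := fun σ => by simp only [hSper]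
  have hpe : IsPersistentlyExciting (fun t => γ * S₀ (t / ε) ^ 2) (γs * δ₀ / ε) (γs * δ₀) := by
    have hpe₁ := (hper.isPersistentlyExciting one_pos ((hS.pow 2).intervalIntegrable 0 1)
      fun σ => sq_nonneg _).const_mul_comp_div hγ₀ hε
    rw [← hδ₀, div_one] at hpe₁
    convert hpe₁ using 2 <;> rw [hγ] <;> field_simp
  have hw : ∀ t, 0 ≤ t → |γ * d₁ t + d₂ t| ≤ γ * (c₁ * ε ^ 2) + c₂ * ε := fun t ht =>
    (abs_add_le _ _).trans (by rw [abs_mul, abs_of_nonneg hγ₀]; gcongr; exacts [hd₁ t ht, hd₂ t ht])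
  have hθ' : ∀ t, 0 ≤ t → HasDerivAt θ (-(γ * S₀ (t / ε) ^ 2) * θ t + (γ * d₁ t + d₂ t)) t :=
    fun t ht => (hθ t ht).congr_deriv (by ring)
  have hρ : 0 < γs * δ₀ / ε := by positivity
  have hcont : Continuous fun t => γ * S₀ (t / ε) ^ 2 := by fun_prop
  have hC : exp (γs * δ₀) * (γ * (c₁ * ε ^ 2) + c₂ * ε) / (γs * δ₀ / ε) =
      exp (γs * δ₀) * (γs * c₁ + c₂) * ε ^ 2 / (γs * δ₀) := by
    rw [hγ]; field_simp
  rw [← hC]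
  exact ⟨fun t ht => hpe.abs_le_of_hasDerivAt hρ hcont (by fun_prop) hw hθ' ht,
    hpe.limsup_abs_le_of_hasDerivAt hρ hcont (by fun_prop) hw hθ'⟩
end

section
/- Let S₀ : ℝ → ℝ be continuous, 1-periodic, bounded by M, with δ₀ := ∫₀¹ S₀(σ)² dσ > 0. Let ε ∈ (0,1), γ⋆ > 0, γ := γ⋆/ε, and S(t) := S₀(t/ε). Let y_v : ℝ → ℝ be Lipschitz with constant c_v, and suppose Y : [0,∞) → ℝ satisfies Y(t) = S(t) ε y_v(t − ε) + r(t) with |r(t)| ≤ C ε² for all t. Let θ̂₂ : [0,∞) → ℝ be differentiable with θ̂₂'(t) = γ S(t) (Y(t) − S(t) θ̂₂(t)), and define ŷ_v(t) := θ̂₂(t)/ε. Then limsup_{t→∞} |ŷ_v(t) − y_v(t)| ≤ e^{γ⋆δ₀} (γ⋆ (M² c_v + M C) + c_v) ε / (γ⋆ δ₀), i.e. the virtual-output estimation error is ultimately O(ε), with exponential convergence to this neighborhood. -/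
/-!
The estimate `ŷ_v = θ̂₂ / ε` obeys the time-varying low-pass filter `ŷ_v' = q (ψ - ŷ_v) + w`
tracking the lagged output `ψ(t) = y_v(t - ε)`, with gain `q = γ S²` and forcing
`w = γ S r / ε = O(ε)`. With the integrating factor `exp Γ`, `Γ(t) = ∫₀ᵗ q`, the tracking error is
bounded by the initial error plus the Lipschitz drift of `ψ` and the forcing, both weighted by
`∫₀ᵗ exp Γ`. Periodicity of `S₀` gives persistent excitation, `∫ₛᵗ q ≥ γ δ₀ (t - s) - γ⋆ δ₀`,
so that `exp (-Γ t) ∫₀ᵗ exp Γ ≤ exp (γ⋆ δ₀) ε / (γ⋆ δ₀)` and the initial error decays like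
`exp (-γ δ₀ t)`. The lag between `ψ` and `y_v` costs a further `c_v ε`.
-/

open Filter Set Real intervalIntegral Topology MeasureTheory

theorem Function.Periodic.mul_integral_period_le_integral {f : ℝ → ℝ} {T : ℝ}
    (hf : Function.Periodic f T) (hT : 0 < T) (hfi : ∀ a b, IntervalIntegrable f volume a b)
    (hf0 : ∀ x, 0 ≤ f x) (a b : ℝ) :
    ((b - a) / T - 1) * ∫ x in 0..T, f x ≤ ∫ x in a..b, f x := by
  set n := ⌊(b - a) / T⌋
  have hnT : a + n • T ≤ b := by
    have := (le_div_iff₀ hT).1 (Int.floor_le ((b - a) / T))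
    rw [zsmul_eq_mul]; linarith
  calc ((b - a) / T - 1) * ∫ x in 0..T, f x
      ≤ n * ∫ x in 0..T, f x :=
        mul_le_mul_of_nonneg_right (Int.sub_one_lt_floor _).le
          (integral_nonneg hT.le fun x _ => hf0 x)
    _ = ∫ x in a..a + n • T, f x := by
        rw [hf.intervalIntegral_add_zsmul_eq n a hfi, hf.intervalIntegral_add_eq a 0, zero_add,
          zsmul_eq_mul]
    _ ≤ ∫ x in a..b, f x := by
        rw [← integral_add_adjacent_intervals (hfi a (a + n • T)) (hfi _ b)]
        exact le_add_of_nonneg_right (integral_nonneg hnT fun x _ => hf0 x)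

theorem integral_exp_le_of_linear_growth {G : ℝ → ℝ} (hG : Continuous G) {lam κ T : ℝ}
    (hlam : 0 < lam) (hT : 0 ≤ T) (hGT : ∀ s ∈ Icc 0 T, lam * (T - s) - κ ≤ G T - G s) :
    ∫ s in 0..T, exp (G s) ≤ exp (G T + κ) / lam := by
  calc ∫ s in 0..T, exp (G s)
      ≤ ∫ s in 0..T, exp (G T + κ) * exp (lam * s - lam * T) := by
        refine integral_mono_on hT ((by fun_prop : Continuous _).intervalIntegrable _ _)
          ((by fun_prop : Continuous _).intervalIntegrable _ _) fun s hs => ?_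
        rw [← exp_add]
        exact exp_le_exp.2 (by linarith [hGT s hs])
    _ = exp (G T + κ) * ((1 - exp (-(lam * T))) / lam) := by
        rw [intervalIntegral.integral_const_mul, integral_comp_mul_sub (f := exp) hlam.ne',
          integral_exp]
        simp only [mul_zero, zero_sub, sub_self, exp_zero, smul_eq_mul]
        ring
    _ ≤ exp (G T + κ) / lam := by
        rw [mul_div_assoc']
        exact div_le_div_of_nonneg_right
          (mul_le_of_le_one_right (exp_pos _).le (by linarith [exp_pos (-(lam * T))])) hlam.le

theorem tendsto_exp_sub_mul_mul_add {lam : ℝ} (hlam : 0 < lam) (κ a b : ℝ) :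
    Tendsto (fun t => exp (κ - lam * t) * (a + b * t)) atTop (𝓝 0) := by
  have hu : Tendsto (fun t => lam * t) atTop atTop := tendsto_id.const_mul_atTop hlam
  have h := ((tendsto_pow_mul_exp_neg_atTop_nhds_zero 0).comp hu).const_mul a |>.add
    (((tendsto_pow_mul_exp_neg_atTop_nhds_zero 1).comp hu).const_mul (b / lam))
    |>.const_mul (exp κ)
  simp only [mul_zero, add_zero] at h
  refine h.congr fun t => ?_
  simp only [Function.comp_apply, pow_zero, pow_one, sub_eq_add_neg κ, exp_add]
  field_simp

section LowPass

variable {q ψ w x : ℝ → ℝ} {L W : ℝ}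

theorem lowPass_weighted_error_le (hq : Continuous q) (hq0 : ∀ t, 0 ≤ q t)
    (hψ : ∀ a b, |ψ a - ψ b| ≤ L * |a - b|)
    (hx : ∀ t, 0 ≤ t → HasDerivAt x (q t * (ψ t - x t) + w t) t)
    (hw : ∀ t, 0 ≤ t → |w t| ≤ W) {T : ℝ} (hT : 0 ≤ T) :
    exp (∫ u in 0..T, q u) * |x T - ψ T| ≤
      |x 0 - ψ T| + (L + W) * ∫ s in 0..T, exp (∫ u in 0..s, q u) := by
  set Γ := fun t => ∫ u in 0..t, q u
  have hΓ : ∀ t, HasDerivAt Γ (q t) t := fun t => (hq.integral_hasStrictDerivAt 0 t).hasDerivAt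
  have hE : Continuous fun t => exp (Γ t) :=
    continuous_exp.comp (continuous_iff_continuousAt.2 fun t => (hΓ t).continuousAt)
  have hI : ∀ t, HasDerivAt (fun t => ∫ s in 0..t, exp (Γ s)) (exp (Γ t)) t :=
    fun t => (hE.integral_hasStrictDerivAt 0 t).hasDerivAt
  have hL : 0 ≤ L := by simpa using (abs_nonneg _).trans (hψ 1 0)
  have hf : ∀ t, 0 ≤ t → HasDerivAt (fun t => exp (Γ t) * (x t - ψ T))
      (exp (Γ t) * (q t * (ψ t - ψ T) + w t)) t := fun t ht =>
    ((hΓ t).exp.mul ((hx t ht).sub_const _)).congr_deriv (by ring)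
  -- a primitive of the derivative bound in `hbound`, found by integrating the `q`-term by parts
  have hB : ∀ t, HasDerivAt
      (fun t => |x 0 - ψ T| + L * ((T - t) * exp (Γ t) - T + ∫ s in 0..t, exp (Γ s))
        + W * ∫ s in 0..t, exp (Γ s))
      (exp (Γ t) * (q t * (L * (T - t)) + W)) t := fun t =>
    (((((hasDerivAt_id t).const_sub T).mul (hΓ t).exp).sub_const T).add (hI t) |>.const_mul L
      |>.const_add _ |>.add ((hI t).const_mul W)).congr_deriv (by simp only [id]; ring)
  have hbound : ∀ t ∈ Ico 0 T,
      ‖exp (Γ t) * (q t * (ψ t - ψ T) + w t)‖ ≤ exp (Γ t) * (q t * (L * (T - t)) + W) := by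
    rintro t ⟨ht0, htT⟩
    rw [Real.norm_eq_abs, abs_mul, abs_of_pos (exp_pos _)]
    refine mul_le_mul_of_nonneg_left ((abs_add_le _ _).trans (add_le_add ?_ (hw t ht0)))
      (exp_pos _).le
    rw [abs_mul, abs_of_nonneg (hq0 t)]
    refine mul_le_mul_of_nonneg_left ((hψ t T).trans_eq ?_) (hq0 t)
    rw [abs_sub_comm, abs_of_nonneg (by linarith)]
  have hcompare := image_norm_le_of_norm_deriv_right_le_deriv_boundary
    (fun t ht => (hf t ht.1).continuousAt.continuousWithinAt)
    (fun t ht => (hf t ht.1).hasDerivWithinAt) (by simp [Γ]) hB hbound ⟨hT, le_rfl⟩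
  simp only [Real.norm_eq_abs, abs_mul, abs_of_pos (exp_pos _), sub_self, zero_mul, zero_sub]
    at hcompare
  nlinarith [mul_nonneg hL hT]

theorem lowPass_error_le (hq : Continuous q) (hq0 : ∀ t, 0 ≤ q t)
    (hψ : ∀ a b, |ψ a - ψ b| ≤ L * |a - b|)
    (hx : ∀ t, 0 ≤ t → HasDerivAt x (q t * (ψ t - x t) + w t) t)
    (hw : ∀ t, 0 ≤ t → |w t| ≤ W) {lam κ : ℝ} (hlam : 0 < lam)
    (hpe : ∀ s t, 0 ≤ s → s ≤ t → lam * (t - s) - κ ≤ ∫ u in s..t, q u) {t : ℝ} (ht : 0 ≤ t) :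
    |x t - ψ t| ≤ exp (κ - lam * t) * (|x 0 - ψ 0| + L * t) + (L + W) * exp κ / lam := by
  set Γ := fun t => ∫ u in 0..t, q u
  have hΓc : Continuous Γ := continuous_primitive (fun _ _ => hq.intervalIntegrable _ _) 0
  have hincr : ∀ s, Γ t - Γ s = ∫ u in s..t, q u := fun s =>
    integral_interval_sub_left (hq.intervalIntegrable _ _) (hq.intervalIntegrable _ _)
  have hLW : 0 ≤ L + W := add_nonneg (by simpa using (abs_nonneg _).trans (hψ 1 0))
    ((abs_nonneg _).trans (hw 0 le_rfl))
  have hdrift : |x 0 - ψ t| ≤ |x 0 - ψ 0| + L * t := by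
    calc |x 0 - ψ t| ≤ |x 0 - ψ 0| + |ψ 0 - ψ t| := abs_sub_le _ _ _
      _ ≤ |x 0 - ψ 0| + L * t := by simpa [abs_of_nonneg ht] using hψ 0 t
  have hdecay : exp (-Γ t) ≤ exp (κ - lam * t) :=
    exp_le_exp.2 (by linarith [hincr 0, hpe 0 t le_rfl ht, show Γ 0 = 0 from integral_same])
  have hI : ∫ s in 0..t, exp (Γ s) ≤ exp (Γ t + κ) / lam :=
    integral_exp_le_of_linear_growth hΓc hlam ht fun s hs => (hincr s).symm ▸ hpe s t hs.1 hs.2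
  have hweighted := lowPass_weighted_error_le hq hq0 hψ hx hw ht
  calc |x t - ψ t| = exp (-Γ t) * (exp (Γ t) * |x t - ψ t|) := by
        rw [← mul_assoc, ← exp_add, neg_add_cancel, exp_zero, one_mul]
    _ ≤ exp (-Γ t) * (|x 0 - ψ t| + (L + W) * (exp (Γ t + κ) / lam)) := by
        gcongr
        exact hweighted.trans (by gcongr)
    _ = exp (-Γ t) * |x 0 - ψ t| + (L + W) * exp κ / lam := by
        rw [exp_add, exp_neg]; field_simp
    _ ≤ exp (κ - lam * t) * (|x 0 - ψ 0| + L * t) + (L + W) * exp κ / lam := by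
        gcongr

end LowPass

theorem limsup_le_of_le_add_of_tendsto_zero {α : Type*} {l : Filter α} [l.NeBot] {f g : α → ℝ}
    {K : ℝ} (hf : ∀ a, 0 ≤ f a) (hfg : ∀ᶠ a in l, f a ≤ g a + K) (hg : Tendsto g l (𝓝 0)) :
    limsup f l ≤ K := by
  have hgK : Tendsto (fun a => g a + K) l (𝓝 K) := by simpa using hg.add_const K
  calc limsup f l ≤ limsup (fun a => g a + K) l :=
        limsup_le_limsup hfg (isCoboundedUnder_le_of_le l hf) hgK.isBoundedUnder_le
    _ = K := hgK.limsup_eq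

theorem le_intervalIntegral_mul_sq_comp_div {S₀ : ℝ → ℝ} (hS₀ : Continuous S₀)
    (hper : Function.Periodic S₀ 1) {ε γ : ℝ} (hε : 0 < ε) (hγ : 0 ≤ γ) (s t : ℝ) :
    γ * (∫ σ in 0..1, S₀ σ ^ 2) * (t - s) - γ * ε * ∫ σ in 0..1, S₀ σ ^ 2 ≤
      ∫ u in s..t, γ * S₀ (u / ε) ^ 2 := by
  have hperε : Function.Periodic (fun u => S₀ (u / ε) ^ 2) ε := fun u => by
    simp only [add_div, div_self hε.ne', hper _]
  have h := hperε.mul_integral_period_le_integral hε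
    (fun a b => (by fun_prop : Continuous _).intervalIntegrable a b) (fun u => sq_nonneg _) s t
  rw [integral_comp_div (fun σ => S₀ σ ^ 2) hε.ne', zero_div, div_self hε.ne', smul_eq_mul,
    ← mul_assoc, sub_mul, div_mul_cancel₀ _ hε.ne', one_mul] at h
  rw [intervalIntegral.integral_const_mul]
  linarith [mul_le_mul_of_nonneg_left h hγ]

theorem error_constant_le {γs γ δ₀ ε M C c_v : ℝ} (hγs : 0 < γs) (hδ₀ : 0 < δ₀) (hε : 0 < ε)
    (hγ : γ = γs / ε) (hδM : δ₀ ≤ M ^ 2) (hcv : 0 ≤ c_v) :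
    (c_v + γ * M * C * ε) * exp (γs * δ₀) / (γ * δ₀) + c_v * ε ≤
      exp (γs * δ₀) * (γs * (M ^ 2 * c_v + M * C) + c_v) * ε / (γs * δ₀) := by
  have hlag_le : c_v * ε ≤ exp (γs * δ₀) * (γs * M ^ 2 * c_v) * ε / (γs * δ₀) := by
    rw [le_div_iff₀ (by positivity)]
    calc c_v * ε * (γs * δ₀) = c_v * ε * γs * δ₀ := by ring
      _ ≤ c_v * ε * γs * (exp (γs * δ₀) * M ^ 2) :=
          mul_le_mul_of_nonneg_left
            (hδM.trans (le_mul_of_one_le_left (sq_nonneg M) (one_le_exp (by positivity))))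
            (by positivity)
      _ = _ := by ring
  calc (c_v + γ * M * C * ε) * exp (γs * δ₀) / (γ * δ₀) + c_v * ε
      = (c_v + γs * M * C) * exp (γs * δ₀) * ε / (γs * δ₀) + c_v * ε := by
        rw [hγ]; field_simp
    _ ≤ (c_v + γs * M * C) * exp (γs * δ₀) * ε / (γs * δ₀)
        + exp (γs * δ₀) * (γs * M ^ 2 * c_v) * ε / (γs * δ₀) := add_le_add_right hlag_le _
    _ = _ := by ring

/-- Main result on the virtual-output filter: the gradient estimator
`θ̂₂' = γ S (Y − S θ̂₂)`, `ŷ_v = θ̂₂/ε`, with `γ = γ⋆/ε` and the regression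
`Y(t) = S(t) ε y_v(t−ε) + O(ε²)`, reconstructs the virtual output `y_v`
up to an ultimate error of order `ε`. -/
theorem stmt_12 (S₀ : ℝ → ℝ) (hS₀c : Continuous S₀) (hSper : ∀ t : ℝ, S₀ (t + 1) = S₀ t)
    (M : ℝ) (hM : ∀ t : ℝ, |S₀ t| ≤ M)
    (δ₀ : ℝ) (hδ₀ : δ₀ = ∫ σ in (0:ℝ)..1, (S₀ σ)^2) (hδ₀pos : 0 < δ₀)
    (ε : ℝ) (hε : ε ∈ Set.Ioo (0:ℝ) 1) (γs γ : ℝ) (hγs : 0 < γs) (hγ : γ = γs / ε)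
    (S : ℝ → ℝ) (hS : ∀ t : ℝ, S t = S₀ (t / ε))
    (y_v : ℝ → ℝ) (c_v : ℝ) (hyv : ∀ a b : ℝ, |y_v a - y_v b| ≤ c_v * |a - b|)
    (Y r : ℝ → ℝ)
    (hY : ∀ t : ℝ, 0 ≤ t → Y t = S t * (ε * y_v (t - ε)) + r t)
    (C : ℝ) (hr : ∀ t : ℝ, 0 ≤ t → |r t| ≤ C * ε^2)
    (θ : ℝ → ℝ) (hθ : ∀ t : ℝ, 0 ≤ t → HasDerivAt θ (γ * S t * (Y t - S t * θ t)) t)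
    (yhat : ℝ → ℝ) (hyhat : ∀ t : ℝ, yhat t = θ t / ε) :
    limsup (fun t : ℝ => |yhat t - y_v t|) atTop ≤
      Real.exp (γs * δ₀) * (γs * (M^2 * c_v + M * C) + c_v) * ε / (γs * δ₀) := by
  obtain ⟨hε0, -⟩ := hε
  have hγ0 : 0 < γ := hγ ▸ div_pos hγs hε0
  have hγε : γ * ε = γs := by rw [hγ]; field_simp
  have hSM : ∀ t, |S t| ≤ M := fun t => hS t ▸ hM _
  have hM0 : 0 ≤ M := (abs_nonneg _).trans (hM 0)
  -- `ŷ_v` follows the lagged virtual output through a low-pass filter with gain `γ S²`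
  have hfilter : ∀ t, 0 ≤ t → HasDerivAt yhat
      (γ * S t ^ 2 * (y_v (t - ε) - yhat t) + γ * S t * r t / ε) t := by
    intro t ht
    rw [show yhat = fun t => θ t / ε from funext hyhat]
    exact ((hθ t ht).div_const ε).congr_deriv (by rw [hY t ht]; field_simp; ring)
  have hgain : Continuous fun t => γ * S t ^ 2 := by
    simp only [hS]; fun_prop
  have hlag : ∀ a b, |y_v (a - ε) - y_v (b - ε)| ≤ c_v * |a - b| := fun a b => by
    simpa using hyv (a - ε) (b - ε)
  have hforce : ∀ t, 0 ≤ t → |γ * S t * r t / ε| ≤ γ * M * C * ε := fun t ht => by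
    rw [abs_div, abs_mul, abs_mul, abs_of_pos hγ0, abs_of_pos hε0, div_le_iff₀ hε0]
    calc γ * |S t| * |r t| ≤ γ * M * (C * ε ^ 2) :=
          mul_le_mul (mul_le_mul_of_nonneg_left (hSM t) hγ0.le) (hr t ht) (abs_nonneg _)
            (mul_nonneg hγ0.le hM0)
      _ = γ * M * C * ε * ε := by ring
  have hpe : ∀ s t, 0 ≤ s → s ≤ t → γ * δ₀ * (t - s) - γs * δ₀ ≤ ∫ u in s..t, γ * S u ^ 2 :=
    fun s t _ _ => by
      simpa only [hS, ← hδ₀, hγε] using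
        le_intervalIntegral_mul_sq_comp_div hS₀c hSper hε0 hγ0.le s t
  have hlam : 0 < γ * δ₀ := mul_pos hγ0 hδ₀pos
  have hδM : δ₀ ≤ M ^ 2 := by
    have h := integral_mono_on zero_le_one ((hS₀c.pow 2).intervalIntegrable (μ := volume) 0 1)
      intervalIntegrable_const fun σ _ => sq_le_sq' (abs_le.1 (hM σ)).1 (abs_le.1 (hM σ)).2
    simpa [← hδ₀] using h
  have hcv : 0 ≤ c_v := by simpa using (abs_nonneg _).trans (hyv 1 0)
  have hbound : ∀ t, 0 ≤ t → |yhat t - y_v t| ≤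
      exp (γs * δ₀ - γ * δ₀ * t) * (|yhat 0 - y_v (0 - ε)| + c_v * t)
        + ((c_v + γ * M * C * ε) * exp (γs * δ₀) / (γ * δ₀) + c_v * ε) := fun t ht =>
    calc |yhat t - y_v t| ≤ |yhat t - y_v (t - ε)| + |y_v (t - ε) - y_v t| := abs_sub_le _ _ _
      _ ≤ _ := add_le_add
          (lowPass_error_le hgain (fun t => by positivity) hlag hfilter hforce hlam hpe ht)
          (by simpa [abs_of_pos hε0] using hyv (t - ε) t)
      _ = _ := add_assoc _ _ _
  exact (limsup_le_of_le_add_of_tendsto_zero (fun t => abs_nonneg _)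
    (eventually_atTop.2 ⟨0, hbound⟩)
    (tendsto_exp_sub_mul_mul_add hlam (γs * δ₀) |yhat 0 - y_v (0 - ε)| c_v)).trans
    (error_constant_le hγs hδ₀pos hε0 hγ hδM hcv)
end

section
/- Let R ∈ ℝ and a > 0. Let λ, y, u, v₁, v₂, φ : [0,∞) → ℝ be differentiable (y, u continuous) and satisfy λ'(t) = −R y(t) + u(t), v₁'(t) = −a v₁(t) + a u(t), v₂'(t) = −a v₂(t) + a λ(t), φ'(t) = −a φ(t) + a y(t) for all t ≥ 0. Define Y_R(t) := −v₁(t) + a λ(t) − a v₂(t). Then Y_R(t) + R φ(t) = (Y_R(0) + R φ(0)) e^{−a t} for all t ≥ 0; in particular Y_R(t) = −R φ(t) + ε_t with ε_t exponentially decaying, i.e. (Y_R, −φ) is a linear regression for the unknown resistance R up to an exponentially decaying residual. -/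
/-! `Y_R + R φ` is annihilated by `d/dt + a`: the inputs `u` cancel between `v₁` and `λ`, and the
`λ` terms between `λ` and `v₂`. Hence `(Y_R + R φ) e^{a t}` has zero derivative on `[0, ∞)`. -/

open Real

theorem eq_mul_exp_of_hasDerivAt_const_mul {g : ℝ → ℝ} {k : ℝ}
    (hg : ∀ t, 0 ≤ t → HasDerivAt g (k * g t) t) {t : ℝ} (ht : 0 ≤ t) :
    g t = g 0 * exp (k * t) := by
  set h : ℝ → ℝ := fun s => g s * exp (-(k * s))
  have hh : ∀ s, 0 ≤ s → HasDerivAt h 0 s := by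
    intro s hs
    have he : HasDerivAt (fun s => exp (-(k * s))) (exp (-(k * s)) * -(k * 1)) s :=
      ((hasDerivAt_id s).const_mul k).neg.exp
    exact ((hg s hs).mul he).congr_deriv (by ring)
  have hconst : h t = h 0 :=
    constant_of_has_deriv_right_zero
      (fun x hx => (hh x hx.1).continuousAt.continuousWithinAt)
      (fun x hx => (hh x hx.1).hasDerivWithinAt) t ⟨ht, le_rfl⟩
  simp only [h, mul_zero, neg_zero, exp_zero, mul_one] at hconst
  rw [← hconst, mul_assoc, ← exp_add, neg_add_cancel, exp_zero, mul_one]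

theorem stmt_17_general (R a : ℝ)
    (lam y u v₁ v₂ φ : ℝ → ℝ)
    (hlam : ∀ t : ℝ, 0 ≤ t → HasDerivAt lam (-R * y t + u t) t)
    (hv₁ : ∀ t : ℝ, 0 ≤ t → HasDerivAt v₁ (-a * v₁ t + a * u t) t)
    (hv₂ : ∀ t : ℝ, 0 ≤ t → HasDerivAt v₂ (-a * v₂ t + a * lam t) t)
    (hφ : ∀ t : ℝ, 0 ≤ t → HasDerivAt φ (-a * φ t + a * y t) t)
    (Y_R : ℝ → ℝ) (hYR : ∀ t : ℝ, Y_R t = -v₁ t + a * lam t - a * v₂ t) :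
    ∀ t : ℝ, 0 ≤ t →
      Y_R t + R * φ t = (Y_R 0 + R * φ 0) * Real.exp (-a * t) := by
  have hresidual : ∀ t, 0 ≤ t →
      HasDerivAt (fun s => Y_R s + R * φ s) (-a * (Y_R t + R * φ t)) t := by
    intro t ht
    simp only [hYR]
    exact ((((hv₁ t ht).neg.add ((hlam t ht).const_mul a)).sub
      ((hv₂ t ht).const_mul a)).add ((hφ t ht).const_mul R)).congr_deriv (by ring)
  exact fun t ht => eq_mul_exp_of_hasDerivAt_const_mul hresidual ht

/-- Filtered linear regression for the unknown resistance in the MagLev adaptive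
observer: with `λ' = −R y + u` and first-order filters `v₁, v₂, φ` of `u, λ, y`,
the signal `Y_R := −v₁ + aλ − a v₂` satisfies `Y_R + R φ = (Y_R(0) + R φ(0)) e^{−at}`. -/
theorem stmt_17 (R a : ℝ) (ha : 0 < a)
    (lam y u v₁ v₂ φ : ℝ → ℝ) (hy : Continuous y) (hu : Continuous u)
    (hlam : ∀ t : ℝ, 0 ≤ t → HasDerivAt lam (-R * y t + u t) t)
    (hv₁ : ∀ t : ℝ, 0 ≤ t → HasDerivAt v₁ (-a * v₁ t + a * u t) t)
    (hv₂ : ∀ t : ℝ, 0 ≤ t → HasDerivAt v₂ (-a * v₂ t + a * lam t) t)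
    (hφ : ∀ t : ℝ, 0 ≤ t → HasDerivAt φ (-a * φ t + a * y t) t)
    (Y_R : ℝ → ℝ) (hYR : ∀ t : ℝ, Y_R t = -v₁ t + a * lam t - a * v₂ t) :
    ∀ t : ℝ, 0 ≤ t →
      Y_R t + R * φ t = (Y_R 0 + R * φ 0) * Real.exp (-a * t) :=
  stmt_17_general R a lam y u v₁ v₂ φ hlam hv₁ hv₂ hφ Y_R hYR
end

section
/- Let m, k, γ_p > 0 and G, c ∈ ℝ. Let q, p, λ, z : [0,∞) → ℝ be differentiable and satisfy q'(t) = p(t)/m, p'(t) = −mG + λ(t)²/(2k), and z'(t) = −(γ_p/(km)) z(t) + λ(t)²/(2k) + (γ_p²/(km)) (c − q(t))/k − mG for all t ≥ 0. Define the observation error e(t) := z(t) − γ_p (c − q(t))/k − p(t). Then e(t) = e(0) e^{−γ_p t/(km)} for all t ≥ 0; i.e. the momentum estimate x̂₃ := z − γ_p (c−q)/k converges to p exponentially with rate γ_p/(km). -/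
open Real

/-- `t ↦ exp (-a t) • f t` has zero derivative, hence is constant on `[0, ∞)`. -/
theorem eq_exp_smul_of_hasDerivAt_eq_smul {E : Type*} [NormedAddCommGroup E] [NormedSpace ℝ E]
    {f : ℝ → E} {a : ℝ} (hf : ∀ t, 0 ≤ t → HasDerivAt f (a • f t) t) {t : ℝ} (ht : 0 ≤ t) :
    f t = exp (a * t) • f 0 := by
  set g : ℝ → E := fun s => exp (-a * s) • f s
  have hg : ∀ s, 0 ≤ s → HasDerivAt g 0 s := by
    intro s hs
    have hexp : HasDerivAt (fun s => exp (-a * s)) (exp (-a * s) * -a) s := by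
      simpa using ((hasDerivAt_id s).const_mul (-a)).exp
    refine (hexp.smul (hf s hs)).congr_deriv ?_
    rw [smul_smul, ← add_smul]
    simp
  have hg_const : g t = g 0 :=
    constant_of_has_deriv_right_zero (fun s hs => (hg s hs.1).continuousAt.continuousWithinAt)
      (fun s hs => (hg s hs.1).hasDerivWithinAt) t ⟨ht, le_rfl⟩
  simp only [g, mul_zero, exp_zero, one_smul] at hg_const
  rw [← hg_const, smul_smul, ← exp_add]
  simp

theorem stmt_18_general (m k γp : ℝ)
    (G c : ℝ) (q p lam z : ℝ → ℝ)
    (hq : ∀ t : ℝ, 0 ≤ t → HasDerivAt q (p t / m) t)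
    (hp : ∀ t : ℝ, 0 ≤ t → HasDerivAt p (-(m * G) + (lam t)^2 / (2 * k)) t)
    (hz : ∀ t : ℝ, 0 ≤ t → HasDerivAt z
      (-(γp / (k * m)) * z t + (lam t)^2 / (2 * k) + (γp^2 / (k * m)) * ((c - q t) / k)
        - m * G) t)
    (e : ℝ → ℝ) (he : ∀ t : ℝ, e t = z t - γp * ((c - q t) / k) - p t) :
    ∀ t : ℝ, 0 ≤ t → e t = e 0 * Real.exp (-(γp / (k * m)) * t) := by
  have he_deriv : ∀ t, 0 ≤ t → HasDerivAt e (-(γp / (k * m)) • e t) t := by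
    intro t ht
    -- The force terms `λ²/(2k) - mG` cancel, and the injection `-γp ẏ_v = γp p/(km)` supplies
    -- the missing `-(γp/(km)) · (-p)` term.
    rw [he t, funext he]
    exact (((hz t ht).sub ((((hq t ht).const_sub c).div_const k).const_mul γp)).sub
      (hp t ht)).congr_deriv (by rw [smul_eq_mul]; ring)
  intro t ht
  rw [eq_exp_smul_of_hasDerivAt_eq_smul he_deriv ht, smul_eq_mul, mul_comm]

/-- Nominal convergence of the KKL momentum observer for the 1-dof MagLev ball:
the error `e = z − γ_p (c−q)/k − p` decays exponentially with rate `γ_p/(km)`. -/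
theorem stmt_18 (m k γp : ℝ) (hm : 0 < m) (hk : 0 < k) (hγp : 0 < γp)
    (G c : ℝ) (q p lam z : ℝ → ℝ)
    (hq : ∀ t : ℝ, 0 ≤ t → HasDerivAt q (p t / m) t)
    (hp : ∀ t : ℝ, 0 ≤ t → HasDerivAt p (-(m * G) + (lam t)^2 / (2 * k)) t)
    (hz : ∀ t : ℝ, 0 ≤ t → HasDerivAt z
      (-(γp / (k * m)) * z t + (lam t)^2 / (2 * k) + (γp^2 / (k * m)) * ((c - q t) / k)
        - m * G) t)
    (e : ℝ → ℝ) (he : ∀ t : ℝ, e t = z t - γp * ((c - q t) / k) - p t) :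
    ∀ t : ℝ, 0 ≤ t → e t = e 0 * Real.exp (-(γp / (k * m)) * t) :=
  stmt_18_general m k γp G c q p lam z hq hp hz e he
end
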